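/- Universal dilation theorem: for every finite state space E there exist a finite set G, a bijection φ : E × G → E × G, and for every sequence of stochastic matrices (P(t))_{t≥1} on E a sequence of probability measures (q(t))_{t≥1} on G, such that for all t, i, j: P(t)_{ij} = ∑_{g∈G} q_g(t) · δ_{φ^E(i,g),j}, where φ^E is the E-component of φ. Consequently the process Xₜ = φ^E(X_{t-1}, Yₜ), with (Yₜ) independent with laws q(t) and X₀ = k, is a Markov chain with transition matrices (P(t)) for every k, and G and φ do not depend on the sequence (P(t)). -/

import Mathlib

/-!
Take `G = E × (E → E)` and `φ (i, (e, f)) = (f i, (i, f[i ↦ e]))`, a bijection whose `E`-component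
is the evaluation `f i`. Choosing the rows of `P(t)` independently gives the weights
`q_{(e₀, f)}(t) = ∏ᵢ P(t)_{i, f i}` on random maps `f`, whose marginal at `i` is the `i`-th row of
`P(t)`. The Markov property is checked on the finite partition of `Ω` into cylinders of the history
`(X₀, Y₁, …, Yₜ)`: `Xₜ` is constant on each cylinder, and `Yₜ₊₁` has law `q(t+1)` given it.
-/

open MeasureTheory

/-- The process `Xₜ` on `Ω = E × G^ℕ`: `X₀(i,(gₙ)) = i`, `Xₜ = φ^E(X_{t-1}, Yₜ)`. -/
def dilX {E G : Type} (φE : E → G → E) : ℕ → (E × (ℕ → G)) → E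
  | 0, ω => ω.1
  | t + 1, ω => φE (dilX φE t ω) (ω.2 (t + 1))

/-- The filtration `𝓕ₜ = σ(X₀, Y₁, …, Yₜ)` on `Ω = E × G^ℕ`. -/
def dilFilt (E G : Type) [MeasurableSpace E] [MeasurableSpace G] (t : ℕ) :
    MeasurableSpace (E × (ℕ → G)) :=
  MeasurableSpace.comap (fun ω : E × (ℕ → G) => ω.1) inferInstance ⊔
    ⨆ s ∈ Finset.Icc 1 t,
      MeasurableSpace.comap (fun ω : E × (ℕ → G) => ω.2 s) inferInstance

/-- The Markov chain clause: whenever `X₀ = k` and the inputs `(Yₜ)` are independent with laws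
`q(t)` — i.e. `μ = δ_k ⊗ (⊗_t q(t))`, characterized by its values on cylinders — the process
`Xₜ = φ^E(X_{t-1}, Yₜ)` is a Markov chain with transition matrices
`P(t)_{ij} = ∑_g q_g(t) δ_{φ^E(i,g),j}`. -/
def MarkovDilationClause (E G : Type) [Fintype E] [Fintype G] [DecidableEq E]
    (φE : E → G → E) (q : ℕ → G → ℝ) : Prop :=
  letI : MeasurableSpace E := ⊤
  letI : MeasurableSpace G := ⊤
  ∀ (k : E) (μ : Measure (E × (ℕ → G))), IsProbabilityMeasure μ →
    (∀ (t : ℕ) (k' : E) (γ : ℕ → G),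
      μ {ω | ω.1 = k' ∧ ∀ s ∈ Finset.Icc 1 t, ω.2 s = γ s}
        = (if k' = k then 1 else 0) * ∏ s ∈ Finset.Icc 1 t, ENNReal.ofReal (q s (γ s))) →
    μ {ω | dilX φE 0 ω = k} = 1 ∧
    ∀ (t : ℕ) (j : E),
      μ[Set.indicator {ω | dilX φE (t + 1) ω = j} (fun _ => (1 : ℝ)) | dilFilt E G t]
        =ᵐ[μ] fun ω => ∑ g : G, q (t + 1) g * (if φE (dilX φE t ω) g = j then 1 else 0)

/-- The body of the universal dilation statement, for a fixed environment `(G, φ)`: every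
sequence of stochastic matrices `(P(t))` on `E` is realized by a suitable sequence of
probability distributions `(q(t))` on `G`, via `P(t)_{ij} = ∑_g q_g(t) δ_{φ^E(i,g),j}`. -/
def UniversalDilationBody (E G : Type) [Fintype E] [Fintype G] [DecidableEq E]
    (φ : E × G ≃ E × G) : Prop :=
  ∀ P : ℕ → Matrix E E ℝ,
    (∀ t i j, 0 ≤ P t i j) → (∀ t i, ∑ j, P t i j = 1) →
    ∃ q : ℕ → G → ℝ,
      (∀ t g, 0 ≤ q t g) ∧ (∀ t, ∑ g, q t g = 1) ∧
      (∀ t i j, P t i j = ∑ g, q t g * (if (φ (i, g)).1 = j then 1 else 0)) ∧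
      MarkovDilationClause E G (fun i g => (φ (i, g)).1) q

open Finset

section ProductWeights

variable {ι κ R : Type*} [Fintype ι] [DecidableEq ι] [Fintype κ] [CommSemiring R]

theorem Fintype.sum_prod_apply_eq_one {w : ι → κ → R} (hw : ∀ i, ∑ j, w i j = 1) :
    ∑ f : ι → κ, ∏ i, w i (f i) = 1 := by
  simp [← Fintype.prod_sum, hw]

theorem Fintype.sum_ite_fst_eq_mul {α : Type*} [Fintype α] [DecidableEq α] (a₀ : α)
    (p h : κ → R) : ∑ x : α × κ, (if x.1 = a₀ then p x.2 else 0) * h x.2 = ∑ l, p l * h l := by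
  rw [Fintype.sum_prod_type, Fintype.sum_eq_single a₀ fun a ha => by simp [ha]]
  simp

theorem Fintype.sum_prod_apply_mul_ite_eq [DecidableEq κ] {w : ι → κ → R}
    (hw : ∀ i, ∑ j, w i j = 1) (i₀ : ι) (j₀ : κ) :
    ∑ f : ι → κ, (∏ i, w i (f i)) * (if f i₀ = j₀ then 1 else 0) = w i₀ j₀ := by
  set w' : ι → κ → R := fun i j => w i j * if i = i₀ then (if j = j₀ then 1 else 0) else 1
  have hprod : ∀ f : ι → κ, ∏ i, w' i (f i) = (∏ i, w i (f i)) * if f i₀ = j₀ then 1 else 0 := by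
    intro f
    simp only [w', prod_mul_distrib, prod_ite_eq']
  have hrow : ∀ i ≠ i₀, ∑ j, w' i j = 1 := fun i hi => by simp [w', hi, hw]
  calc ∑ f : ι → κ, (∏ i, w i (f i)) * (if f i₀ = j₀ then 1 else 0)
      = ∏ i, ∑ j, w' i j := by simp only [Fintype.prod_sum, hprod]
    _ = ∑ j, w' i₀ j := Fintype.prod_eq_single i₀ hrow
    _ = w i₀ j₀ := by simp [w']

end ProductWeights

theorem ae_eq_condExp_of_forall_setIntegral_fiber_eq {Ω α F : Type*}
    [NormedAddCommGroup F] [NormedSpace ℝ F] [CompleteSpace F]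
    {m m₀ : MeasurableSpace Ω} {μ : Measure Ω} [Finite α] [MeasurableSpace α]
    [MeasurableSingletonClass α] {π : Ω → α} (hπ : Measurable π) (hm : m ≤ m₀)
    [SigmaFinite (μ.trim hm)] (hmπ : m ≤ MeasurableSpace.comap π ⊤) {f g : Ω → F}
    (hf : Integrable f μ) (hg : Integrable g μ) (hgm : StronglyMeasurable[m] g)
    (hfg : ∀ x, ∫ ω in π ⁻¹' {π x}, g ω ∂μ = ∫ ω in π ⁻¹' {π x}, f ω ∂μ) :
    g =ᵐ[μ] μ[f | m] := by
  classical
  have := Fintype.ofFinite α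
  refine ae_eq_condExp_of_forall_setIntegral_eq hm hf (fun _ _ _ => hg.integrableOn)
    (fun s hs _ => ?_) hgm.aestronglyMeasurable
  obtain ⟨S, -, rfl⟩ := hmπ s hs
  have hfib : ∀ a ∈ S.toFinset, MeasurableSet (π ⁻¹' {a}) :=
    fun a _ => hπ (measurableSet_singleton a)
  have hdisj : (S.toFinset : Set α).PairwiseDisjoint fun a => π ⁻¹' {a} :=
    Set.pairwiseDisjoint_fiber π _
  rw [← Set.coe_toFinset S, ← Finset.set_biUnion_preimage_singleton,
    integral_biUnion_finset _ hfib hdisj fun _ _ => hg.integrableOn,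
    integral_biUnion_finset _ hfib hdisj fun _ _ => hf.integrableOn]
  refine Finset.sum_congr rfl fun a _ => ?_
  by_cases ha : a ∈ Set.range π
  · obtain ⟨x, rfl⟩ := ha
    exact hfg x
  · simp [Set.preimage_singleton_eq_empty.mpr ha]

def dilEquiv (E : Type) [DecidableEq E] : E × (E × (E → E)) ≃ E × (E × (E → E)) where
  toFun p := (p.2.2 p.1, (p.1, Function.update p.2.2 p.1 p.2.1))
  invFun p := (p.2.1, (p.2.2 p.2.1, Function.update p.2.2 p.2.1 p.1))
  left_inv := by
    rintro ⟨i, e, f⟩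
    simp
  right_inv := by
    rintro ⟨j, i, h⟩
    simp

section DilationProcess

variable {E G : Type}

def dilCylinder (t : ℕ) (k : E) (γ : ℕ → G) : Set (E × (ℕ → G)) :=
  {ω | ω.1 = k ∧ ∀ s ∈ Finset.Icc 1 t, ω.2 s = γ s}

def dilHistory (t : ℕ) (ω : E × (ℕ → G)) : E × (Finset.Icc 1 t → G) :=
  (ω.1, fun s => ω.2 s)

theorem dilHistory_preimage_singleton (t : ℕ) (ω₀ : E × (ℕ → G)) :
    dilHistory t ⁻¹' {dilHistory t ω₀} = dilCylinder t ω₀.1 ω₀.2 := by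
  ext ω
  simp [dilHistory, dilCylinder, Prod.ext_iff, funext_iff]

theorem dilCylinder_succ_update (t : ℕ) (k : E) (γ : ℕ → G) (g : G) :
    dilCylinder (t + 1) k (Function.update γ (t + 1) g)
      = dilCylinder t k γ ∩ (fun ω => ω.2 (t + 1)) ⁻¹' {g} := by
  ext ω
  simp only [dilCylinder, Set.mem_inter_iff, Set.mem_ofPred_eq, Set.mem_preimage,
    Set.mem_singleton_iff, Finset.mem_Icc]
  constructor
  · rintro ⟨hk, hγ⟩
    refine ⟨⟨hk, fun s hs => ?_⟩, by simpa using hγ (t + 1) (by omega)⟩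
    simpa [Function.update_of_ne (show s ≠ t + 1 by omega)] using hγ s (by omega)
  · rintro ⟨⟨hk, hγ⟩, hg⟩
    refine ⟨hk, fun s hs => ?_⟩
    rcases eq_or_ne s (t + 1) with rfl | hne
    · simpa using hg
    · simpa [Function.update_of_ne hne] using hγ s (by omega)

theorem dilX_eq_of_mem_dilCylinder (φE : E → G → E) :
    ∀ (t : ℕ) {ω ω₀ : E × (ℕ → G)}, ω ∈ dilCylinder t ω₀.1 ω₀.2 → dilX φE t ω = dilX φE t ω₀
  | 0, _, _, h => h.1
  | t + 1, ω, ω₀, h => by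
    have hpast : ω ∈ dilCylinder t ω₀.1 ω₀.2 := by
      rw [← Function.update_eq_self (t + 1) ω₀.2, dilCylinder_succ_update] at h
      exact h.1
    simp only [dilX, dilX_eq_of_mem_dilCylinder φE t hpast, h.2 (t + 1) (by simp)]

variable [MeasurableSpace E] [MeasurableSpace G]

theorem dilFilt_mono : Monotone (dilFilt E G) := fun _ _ h =>
  sup_le_sup_left (biSup_mono fun _ hs => Finset.Icc_subset_Icc_right h hs) _

theorem measurable_fst_dilFilt (t : ℕ) :
    Measurable[dilFilt E G t] fun ω : E × (ℕ → G) => ω.1 :=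
  Measurable.of_comap_le le_sup_left

theorem measurable_input_dilFilt {s t : ℕ} (hs : s ∈ Finset.Icc 1 t) :
    Measurable[dilFilt E G t] fun ω : E × (ℕ → G) => ω.2 s :=
  Measurable.of_comap_le <| (le_iSup₂ (f := fun s (_ : s ∈ Finset.Icc 1 t) =>
    MeasurableSpace.comap (fun ω : E × (ℕ → G) => ω.2 s) inferInstance) s hs).trans le_sup_right

theorem dilFilt_le (t : ℕ) : dilFilt E G t ≤ Prod.instMeasurableSpace :=
  sup_le measurable_fst.comap_le
    (iSup₂_le fun s _ => ((measurable_pi_apply s).comp measurable_snd).comap_le)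

theorem measurable_dilX [Countable E] [Countable G] [MeasurableSingletonClass E]
    [MeasurableSingletonClass G] (φE : E → G → E) :
    ∀ t : ℕ, Measurable[dilFilt E G t] (dilX φE t)
  | 0 => measurable_fst_dilFilt 0
  | t + 1 => (measurable_of_countable (Function.uncurry φE)).comp <|
      ((measurable_dilX φE t).mono (dilFilt_mono t.le_succ) le_rfl).prodMk
        (measurable_input_dilFilt (by simp))

theorem measurable_dilHistory (t : ℕ) : Measurable (dilHistory (E := E) (G := G) t) :=
  measurable_fst.prodMk <| measurable_pi_lambda _ fun s =>
    (measurable_pi_apply s.1).comp measurable_snd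

theorem dilFilt_le_comap_dilHistory (t : ℕ) :
    dilFilt E G t ≤ MeasurableSpace.comap (dilHistory t) ⊤ := by
  have h : ∀ {β : Type} [MeasurableSpace β] (f : E × (Finset.Icc 1 t → G) → β),
      Measurable[MeasurableSpace.comap (dilHistory t) ⊤] (f ∘ dilHistory t) :=
    fun f => measurable_from_top.comp (comap_measurable _)
  exact sup_le (h Prod.fst).comap_le (iSup₂_le fun s hs => (h fun d => d.2 ⟨s, hs⟩).comap_le)

end DilationProcess

section MarkovStep

variable {E G : Type} [MeasurableSpace E] [MeasurableSpace G] [Finite E] [Fintype G]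
  [MeasurableSingletonClass E] [MeasurableSingletonClass G] [DecidableEq E]
  {φE : E → G → E} {μ : Measure (E × (ℕ → G))} [IsFiniteMeasure μ] {t : ℕ} {p : G → ℝ}

theorem setIntegral_dilCylinder_transition_eq (hp : ∀ g, 0 ≤ p g)
    (hstep : ∀ k γ g, μ (dilCylinder (t + 1) k (Function.update γ (t + 1) g))
      = ENNReal.ofReal (p g) * μ (dilCylinder t k γ)) (j : E) (ω₀ : E × (ℕ → G)) :
    ∫ ω in dilCylinder t ω₀.1 ω₀.2, (∑ g, p g * if φE (dilX φE t ω) g = j then 1 else 0) ∂μ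
      = ∫ ω in dilCylinder t ω₀.1 ω₀.2,
          {ω | dilX φE (t + 1) ω = j}.indicator (fun _ => (1 : ℝ)) ω ∂μ := by
  set C := dilCylinder t ω₀.1 ω₀.2
  set x := dilX φE t ω₀
  set B := Finset.univ.filter fun g => φE x g = j
  have hC : MeasurableSet C := by
    simpa only [dilHistory_preimage_singleton] using
      measurable_dilHistory t (measurableSet_singleton (dilHistory t ω₀))
  have hA : MeasurableSet {ω | dilX φE (t + 1) ω = j} :=
    (measurable_dilX φE (t + 1)).mono (dilFilt_le _) le_rfl (measurableSet_singleton j)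
  have hstep_cell : ∀ g ∈ B, C ∩ (fun ω => ω.2 (t + 1)) ⁻¹' {g}
      = dilCylinder (t + 1) ω₀.1 (Function.update ω₀.2 (t + 1) g) :=
    fun g _ => (dilCylinder_succ_update t ω₀.1 ω₀.2 g).symm
  have hsplit : C ∩ {ω | dilX φE (t + 1) ω = j} = ⋃ g ∈ B, C ∩ (fun ω => ω.2 (t + 1)) ⁻¹' {g} := by
    ext ω
    simp only [Set.mem_inter_iff, Set.mem_iUnion, Set.mem_preimage, Set.mem_singleton_iff, B,
      Finset.mem_filter, Finset.mem_univ, true_and, exists_prop, Set.mem_ofPred_eq]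
    constructor
    · rintro ⟨hω, hj⟩
      refine ⟨ω.2 (t + 1), ?_, hω, rfl⟩
      rwa [dilX, dilX_eq_of_mem_dilCylinder φE t hω] at hj
    · rintro ⟨g, hg, hω, rfl⟩
      exact ⟨hω, by rwa [dilX, dilX_eq_of_mem_dilCylinder φE t hω]⟩
  calc ∫ ω in C, (∑ g, p g * if φE (dilX φE t ω) g = j then 1 else 0) ∂μ
      = ∫ _ in C, (∑ g, p g * if φE x g = j then 1 else 0) ∂μ :=
        setIntegral_congr_fun hC fun ω hω => by rw [dilX_eq_of_mem_dilCylinder φE t hω]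
    _ = ∑ g ∈ B, p g * μ.real C := by
        rw [setIntegral_const, smul_eq_mul, Finset.mul_sum, Finset.sum_filter]
        exact Finset.sum_congr rfl fun g _ => by split_ifs <;> ring
    _ = μ.real (C ∩ {ω | dilX φE (t + 1) ω = j}) := by
        rw [hsplit, measureReal_biUnion_finset]
        · refine Finset.sum_congr rfl fun g hg => ?_
          rw [hstep_cell g hg, measureReal_def, measureReal_def, hstep, ENNReal.toReal_mul,
            ENNReal.toReal_ofReal (hp g)]
        · exact fun g₁ _ g₂ _ hne => ((Set.pairwiseDisjoint_fiber _ _ (Set.mem_univ g₁)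
            (Set.mem_univ g₂) hne).inter_left' C).inter_right' C
        · exact fun g _ => hC.inter (measurable_snd.eval (measurableSet_singleton g))
    _ = ∫ ω in C, {ω | dilX φE (t + 1) ω = j}.indicator (fun _ => (1 : ℝ)) ω ∂μ := by
        rw [setIntegral_indicator hA, setIntegral_const, smul_eq_mul, mul_one]

theorem condExp_indicator_dilX_succ (hp : ∀ g, 0 ≤ p g)
    (hstep : ∀ k γ g, μ (dilCylinder (t + 1) k (Function.update γ (t + 1) g))
      = ENNReal.ofReal (p g) * μ (dilCylinder t k γ)) (j : E) :
    μ[{ω | dilX φE (t + 1) ω = j}.indicator (fun _ => (1 : ℝ)) | dilFilt E G t]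
      =ᵐ[μ] fun ω => ∑ g, p g * (if φE (dilX φE t ω) g = j then 1 else 0) := by
  have hX : Measurable[dilFilt E G t] (dilX φE t) := measurable_dilX φE t
  have hA : MeasurableSet {ω | dilX φE (t + 1) ω = j} :=
    (measurable_dilX φE (t + 1)).mono (dilFilt_le _) le_rfl (measurableSet_singleton j)
  set h : E → ℝ := fun x => ∑ g, p g * if φE x g = j then 1 else 0
  have hg : Measurable[dilFilt E G t] (h ∘ dilX φE t) := (measurable_of_countable h).comp hX
  refine (ae_eq_condExp_of_forall_setIntegral_fiber_eq (measurable_dilHistory t) (dilFilt_le t)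
    (dilFilt_le_comap_dilHistory t) ((integrable_const 1).indicator hA) ?_
    hg.stronglyMeasurable fun ω₀ => ?_).symm
  · exact (Integrable.of_finite (f := h)).comp_measurable (hX.mono (dilFilt_le t) le_rfl)
  · rw [dilHistory_preimage_singleton]
    exact setIntegral_dilCylinder_transition_eq hp hstep j ω₀

end MarkovStep

theorem markovDilationClause_of_nonneg {E G : Type} [Fintype E] [Fintype G] [DecidableEq E]
    (φE : E → G → E) {q : ℕ → G → ℝ} (hq : ∀ t g, 0 ≤ q t g) :
    MarkovDilationClause E G φE q := by
  let : MeasurableSpace E := ⊤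
  let : MeasurableSpace G := ⊤
  intro k μ _ hcyl
  obtain ⟨ω⟩ := nonempty_of_isProbabilityMeasure μ
  refine ⟨by simpa [dilX] using hcyl 0 k ω.2,
    fun t j => condExp_indicator_dilX_succ (hq (t + 1)) (fun k' γ g => ?_) j⟩
  have hprod : ∏ s ∈ Finset.Icc 1 (t + 1), ENNReal.ofReal (q s (Function.update γ (t + 1) g s))
      = ENNReal.ofReal (q (t + 1) g) * ∏ s ∈ Finset.Icc 1 t, ENNReal.ofReal (q s (γ s)) := by
    rw [Finset.prod_Icc_succ_top (by omega), Function.update_self, mul_comm]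
    congr 1
    refine Finset.prod_congr rfl fun s hs => ?_
    rw [Function.update_of_ne (by simp at hs; omega)]
  simp only [dilCylinder]
  rw [hcyl, hcyl, hprod]
  ring

/-- universal dilation theorem: for every finite state space `E` there exist a
finite set `G` and a bijection `φ : E × G ≃ E × G`, both independent of the Markov evolution,
such that every sequence of stochastic matrices `(P(t))` on `E` is obtained from suitable
distributions `(q(t))` on `G` by `P(t)_{ij} = ∑_g q_g(t) δ_{φ^E(i,g),j}`; consequently the
process `Xₜ = φ^E(X_{t-1}, Yₜ)`, with `(Yₜ)` independent with laws `q(t)` and `X₀ = k`, is a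
Markov chain with transition matrices `(P(t))` for every `k`. -/
theorem universal_dilation_exists (E : Type) [Fintype E] [DecidableEq E] [Nonempty E] :
    ∃ (G : Type) (fG : Fintype G) (φ : E × G ≃ E × G),
      @UniversalDilationBody E G _ fG _ φ := by
  refine ⟨E × (E → E), inferInstance, dilEquiv E, fun P hP hrow => ?_⟩
  let e₀ : E := Classical.arbitrary E
  let q : ℕ → E × (E → E) → ℝ := fun t g => if g.1 = e₀ then ∏ i, P t i (g.2 i) else 0
  have hq : ∀ t g, 0 ≤ q t g := fun t g =>
    ite_nonneg (Finset.prod_nonneg fun i _ => hP t i _) le_rfl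
  refine ⟨q, hq, fun t => ?_, fun t i j => ?_, markovDilationClause_of_nonneg _ hq⟩
  · simpa [Fintype.sum_prod_apply_eq_one (hrow t)] using
      Fintype.sum_ite_fst_eq_mul e₀ (fun f : E → E => ∏ i, P t i (f i)) 1
  · exact (Fintype.sum_prod_apply_mul_ite_eq (hrow t) i j).symm.trans
      (Fintype.sum_ite_fst_eq_mul e₀ _ _).symm
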